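/- The Riemann theta series converges absolutely: let F be a g×g complex symmetric matrix whose imaginary part is positive definite, and let z ∈ ℂ^g; then the series ∑_{n ∈ ℤ^g} exp(2πi(½ nᵀFn + nᵀz)) is absolutely convergent (the family of its terms is summable). -/

import Mathlib

/-! With `Y = Im F`, the modulus of the `n`-th term is `exp (-π nᵀYn - 2π nᵀ Im z)`. Positive
definiteness gives `nᵀYn ≥ c ∑ nᵢ²` for some `c > 0` (the minimum of the form on the unit sphere),
so the term is dominated by the product over the coordinates of the one-variable Gaussian terms
`exp (-π (c m² - 2 |Im zᵢ| |m|))`. Each of these is summable over `ℤ`, and a product of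
nonnegative summable families is summable over `ℤ^g`. -/

open Complex Matrix

theorem exists_pos_mul_norm_sq_le_of_homogeneous {E : Type*} [NormedAddCommGroup E]
    [NormedSpace ℝ E] [FiniteDimensional ℝ E] {Q : E → ℝ} (hQ : Continuous Q)
    (hhom : ∀ (t : ℝ) (x : E), Q (t • x) = t ^ 2 * Q x) (hpos : ∀ x ≠ 0, 0 < Q x) :
    ∃ c > 0, ∀ x, c * ‖x‖ ^ 2 ≤ Q x := by
  have hQ0 : Q 0 = 0 := by simpa using hhom 0 0
  cases subsingleton_or_nontrivial E with
  | inl _ => exact ⟨1, one_pos, fun x => by simp [Subsingleton.elim x 0, hQ0]⟩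
  | inr _ =>
    obtain ⟨x₀, hx₀, hmin⟩ := (isCompact_sphere (0 : E) 1).exists_isMinOn
      (NormedSpace.sphere_nonempty.mpr zero_le_one) hQ.continuousOn
    have hx₀ : x₀ ≠ 0 := ne_zero_of_mem_unit_sphere ⟨x₀, hx₀⟩
    refine ⟨Q x₀, hpos x₀ hx₀, fun x => ?_⟩
    rcases eq_or_ne x 0 with rfl | hx
    · simp [hQ0]
    have hnx : 0 < ‖x‖ := norm_pos_iff.mpr hx
    have hsph : ‖x‖⁻¹ • x ∈ Metric.sphere (0 : E) 1 := by
      simp [norm_smul, hnx.ne']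
    calc Q x₀ * ‖x‖ ^ 2 ≤ Q (‖x‖⁻¹ • x) * ‖x‖ ^ 2 := by gcongr; exact hmin hsph
      _ = Q x := by rw [hhom]; field_simp

theorem Matrix.PosDef.exists_pos_mul_sum_sq_le {ι : Type*} [Fintype ι] {M : Matrix ι ι ℝ}
    (hM : M.PosDef) : ∃ c > 0, ∀ x : ι → ℝ, c * ∑ i, x i ^ 2 ≤ x ⬝ᵥ M *ᵥ x := by
  obtain ⟨c, hc, hle⟩ := exists_pos_mul_norm_sq_le_of_homogeneous
    (Q := fun y : EuclideanSpace ℝ ι => y.ofLp ⬝ᵥ M *ᵥ y.ofLp) (by fun_prop)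
    (fun t y => by
      simp only [WithLp.ofLp_smul, mulVec_smul, dotProduct_smul, smul_dotProduct, smul_eq_mul]
      ring)
    (fun y hy => hM.dotProduct_mulVec_pos (by simpa using hy))
  refine ⟨c, hc, fun x => ?_⟩
  simpa [EuclideanSpace.norm_sq_eq] using hle (WithLp.toLp 2 x)

theorem summable_fin_prod_of_nonneg {β : Type*} :
    ∀ {n : ℕ} (f : Fin n → β → ℝ), (∀ i b, 0 ≤ f i b) → (∀ i, Summable (f i)) →
      Summable fun x : Fin n → β => ∏ i, f i (x i)
  | 0, _, _, _ => .of_finite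
  | n + 1, f, hf, hs => by
    have htail := summable_fin_prod_of_nonneg (fun i => f i.succ) (fun i => hf i.succ)
      (fun i => hs i.succ)
    have hprod := (hs 0).mul_of_nonneg htail (hf 0) fun _ => Finset.prod_nonneg fun _ _ => hf _ _
    refine (Fin.consEquiv fun _ => β).summable_iff.mp (hprod.congr fun p => ?_)
    simp [Fin.prod_univ_succ, Fin.consEquiv]

theorem im_sum_intCast_mul_mul_intCast {ι : Type*} [Fintype ι] (F : Matrix ι ι ℂ) (n : ι → ℤ) :
    (∑ i, ∑ j, (n i : ℂ) * F i j * n j).im =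
      (fun i => (n i : ℝ)) ⬝ᵥ (of fun i j => (F i j).im) *ᵥ fun i => (n i : ℝ) := by
  simp [dotProduct, mulVec, im_sum, Finset.mul_sum, mul_assoc]

theorem norm_exp_two_pi_I_mul (w : ℂ) :
    ‖exp (2 * Real.pi * I * w)‖ = Real.exp (-2 * Real.pi * w.im) := by
  rw [norm_exp]; simp

theorem norm_theta_term_le {ι : Type*} [Fintype ι] (F : Matrix ι ι ℂ) (z : ι → ℂ) {c : ℝ}
    (hc : ∀ x : ι → ℝ, c * ∑ i, x i ^ 2 ≤ x ⬝ᵥ (of fun i j => (F i j).im) *ᵥ x) (n : ι → ℤ) :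
    ‖exp (2 * Real.pi * I *
        ((1 / 2) * (∑ i, ∑ j, (n i : ℂ) * F i j * n j) + ∑ i, (n i : ℂ) * z i))‖ ≤
      ∏ i, Real.exp (-Real.pi * (c * (n i : ℝ) ^ 2 - 2 * |(z i).im| * |(n i : ℝ)|)) := by
  rw [norm_exp_two_pi_I_mul, ← Real.exp_sum, Real.exp_le_exp]
  have hquad := hc fun i => (n i : ℝ)
  have hlin : -(2 * ∑ i, (n i : ℝ) * (z i).im) ≤ ∑ i, 2 * |(z i).im| * |(n i : ℝ)| := by
    rw [Finset.mul_sum, ← Finset.sum_neg_distrib]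
    gcongr with i
    have := neg_abs_le ((n i : ℝ) * (z i).im)
    rw [abs_mul] at this
    linarith
  have him : (∑ i, (n i : ℂ) * z i).im = ∑ i, (n i : ℝ) * (z i).im := by simp [im_sum]
  simp only [add_im, mul_im, him, im_sum_intCast_mul_mul_intCast, Finset.sum_sub_distrib,
    ← Finset.mul_sum]
  norm_num
  nlinarith [Real.pi_pos]

theorem riemann_theta_summable_general (g : ℕ) (F : Matrix (Fin g) (Fin g) ℂ)
    (hpos : (Matrix.of fun i j => (F i j).im).PosDef)
    (z : Fin g → ℂ) :
    Summable (fun n : Fin g → ℤ =>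
      Complex.exp (2 * Real.pi * Complex.I *
        ((1 / 2) * (∑ i, ∑ j, (n i : ℂ) * F i j * (n j : ℂ)) +
          ∑ i, (n i : ℂ) * z i))) := by
  obtain ⟨c, hc, hquad⟩ := hpos.exists_pos_mul_sum_sq_le
  have hfactor (i : Fin g) :
      Summable fun m : ℤ =>
        Real.exp (-Real.pi * (c * (m : ℝ) ^ 2 - 2 * |(z i).im| * |(m : ℝ)|)) := by
    simpa using summable_pow_mul_jacobiTheta₂_term_bound |(z i).im| hc 0
  exact .of_norm_bounded
    (summable_fin_prod_of_nonneg _ (fun _ _ => (Real.exp_pos _).le) hfactor)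
    (norm_theta_term_le F z hquad)

theorem riemann_theta_summable (g : ℕ) (F : Matrix (Fin g) (Fin g) ℂ)
    (hsymm : F.transpose = F)
    (hpos : (Matrix.of fun i j => (F i j).im).PosDef)
    (z : Fin g → ℂ) :
    Summable (fun n : Fin g → ℤ =>
      Complex.exp (2 * Real.pi * Complex.I *
        ((1 / 2) * (∑ i, ∑ j, (n i : ℂ) * F i j * (n j : ℂ)) +
          ∑ i, (n i : ℂ) * z i))) :=
  riemann_theta_summable_general g F hpos z
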